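/- If q lies on the affine segment between p and r in ℝ⁴ and the squared Minkowski intervals η²(p,q) and η²(q,r) are both nonpositive (spacelike or lightlike), then η²(p,r) ≤ η²(p,q) and η²(p,r) ≤ η²(q,r); i.e., extending a spacelike segment yields a segment that is 'shorter' (more negative squared interval) than either piece. -/

import Mathlib

/-! Along the line through `p` and `r` the interval is a quadratic form `Q` evaluated at multiples
of `v = p - r`: `η²(p,q) = l² Q(v)`, `η²(q,r) = (1-l)² Q(v)` and `η²(p,r) = Q(v)`. Since `l² + (1-l)² > 0`,
the two hypotheses force `Q(v) ≤ 0`, and then `l², (1-l)² ≤ 1` gives both inequalities. -/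

def Bmink (u v : Fin 4 → ℝ) : ℝ := u 3 * v 3 - u 0 * v 0 - u 1 * v 1 - u 2 * v 2
def eta2 (p q : Fin 4 → ℝ) : ℝ := Bmink (p - q) (p - q)

namespace QuadraticMap

variable {𝕜 V : Type*} [Field 𝕜] [LinearOrder 𝕜] [IsStrictOrderedRing 𝕜]
  [AddCommGroup V] [Module 𝕜 V] (Q : QuadraticForm 𝕜 V)

theorem nonpos_of_map_smul_nonpos_of_map_one_sub_smul_nonpos {v : V} {l : 𝕜}
    (h : Q (l • v) ≤ 0) (h' : Q ((1 - l) • v) ≤ 0) : Q v ≤ 0 := by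
  rw [Q.map_smul, smul_eq_mul] at h h'
  have hpos : 0 < l * l + (1 - l) * (1 - l) := by nlinarith [sq_nonneg (2 * l - 1)]
  exact nonpos_of_mul_nonpos_left (by linarith [add_mul (l * l) ((1 - l) * (1 - l)) (Q v)]) hpos

theorem le_map_smul_of_nonpos {v : V} (hv : Q v ≤ 0) {c : 𝕜} (hc : |c| ≤ 1) :
    Q v ≤ Q (c • v) := by
  rw [Q.map_smul, smul_eq_mul]
  have hc2 : c * c ≤ 1 := by nlinarith [abs_mul_abs_self c, abs_nonneg c]
  nlinarith

end QuadraticMap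

/-- The Minkowski form with signature `(-,-,-,+)`, time being the last coordinate. -/
noncomputable def minkowskiForm : QuadraticForm ℝ (Fin 4 → ℝ) :=
  QuadraticMap.weightedSumSquares ℝ (![-1, -1, -1, 1] : Fin 4 → ℝ)

theorem eta2_eq_minkowskiForm (p q : Fin 4 → ℝ) : eta2 p q = minkowskiForm (p - q) := by
  simp only [eta2, Bmink, minkowskiForm, QuadraticMap.weightedSumSquares_apply, Fin.sum_univ_four,
    Pi.sub_apply, Matrix.cons_val_zero, Matrix.cons_val_one, Matrix.cons_val, neg_smul, one_smul]
  ring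

theorem spacelike_extension_shorter (p q r : Fin 4 → ℝ)
    (hbet : ∃ l : ℝ, 0 ≤ l ∧ l ≤ 1 ∧ q = p + l • (r - p))
    (hpq : eta2 p q ≤ 0) (hqr : eta2 q r ≤ 0) :
    eta2 p r ≤ eta2 p q ∧ eta2 p r ≤ eta2 q r := by
  obtain ⟨l, hl0, hl1, rfl⟩ := hbet
  have hpq_eq : p - (p + l • (r - p)) = l • (p - r) := by module
  have hqr_eq : p + l • (r - p) - r = (1 - l) • (p - r) := by module
  simp only [eta2_eq_minkowskiForm, hpq_eq, hqr_eq] at hpq hqr ⊢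
  have hpr := minkowskiForm.nonpos_of_map_smul_nonpos_of_map_one_sub_smul_nonpos hpq hqr
  exact ⟨minkowskiForm.le_map_smul_of_nonpos hpr (abs_le.2 ⟨by linarith, hl1⟩),
    minkowskiForm.le_map_smul_of_nonpos hpr (abs_le.2 ⟨by linarith, by linarith⟩)⟩
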